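/- arXiv:1506.02116 — 2 statements merged into one kernel-verified Lean document; each statement's English description precedes it below -/
import Mathlib

section
/- Let p(i,j) = w(j-i) be a transition kernel on ℤ for a finitely supported probability vector w, and let pᵏ denote the k-step transitions. Define qᵏ(i,0) = ∑_{z∈ℤ} pᵏ(i,z)·pᵏ(0,z). Then for all k ≥ 1 and i ≠ 0, qᵏ(i,0) < qᵏ(0,0), provided w has finite support and w is not degenerate (span 1, q(0,0) > 0). -/
/-- `k`-step transition probabilities of the random walk on `ℤ` with one-step
displacement law `w`, i.e. kernel `p(i,j) = w(j-i)`. -/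
noncomputable def pstep (w : ℤ → ℝ) : ℕ → ℤ → ℤ → ℝ
  | 0, i, j => if i = j then 1 else 0
  | k + 1, i, j => ∑' z : ℤ, pstep w k i z * w (j - z)

lemma pstep_succ (w : ℤ → ℝ) (k : ℕ) (i j : ℤ) :
    pstep w (k + 1) i j = ∑' z : ℤ, pstep w k i z * w (j - z) := rfl

lemma pstep_nonneg {w : ℤ → ℝ} (hw : ∀ k, 0 ≤ w k) :
    ∀ k i j, 0 ≤ pstep w k i j
  | 0, i, j => by unfold pstep; split <;> norm_num
  | (k + 1), i, j => by
      rw [pstep_succ]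
      exact tsum_nonneg fun z => mul_nonneg (pstep_nonneg hw k i z) (hw _)

lemma pstep_support_finite {w : ℤ → ℝ} (hw_fin : (Function.support w).Finite) :
    ∀ k i, (Function.support (pstep w k i)).Finite
  | 0, i => (Set.finite_singleton i).subset (fun j hj => by
      simp only [Function.mem_support] at hj
      unfold pstep at hj
      by_contra h
      simp only [Set.mem_singleton_iff] at h
      simp [Ne.symm h] at hj)
  | (k + 1), i => by
      have h1 := pstep_support_finite hw_fin k i
      refine ((h1.add hw_fin)).subset fun j hj => ?_
      simp only [Function.mem_support] at hj
      by_contra h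
      apply hj
      rw [pstep_succ]
      have hz : ∀ z : ℤ, pstep w k i z * w (j - z) = 0 := by
        intro z
        by_contra hz
        apply h
        have h2 : pstep w k i z ≠ 0 := fun h0 => hz (by simp [h0])
        have h3 : w (j - z) ≠ 0 := fun h0 => hz (by simp [h0])
        exact Set.mem_add.mpr ⟨z, h2, j - z, h3, by ring⟩
      rw [tsum_congr hz, tsum_zero]

lemma pstep_translate {w : ℤ → ℝ} :
    ∀ (k : ℕ) (i j c : ℤ), pstep w k (i + c) (j + c) = pstep w k i j
  | 0, i, j, c => by unfold pstep; simp
  | (k + 1), i, j, c => by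
      rw [pstep_succ, pstep_succ,
        ← (Equiv.addRight c).tsum_eq (fun z => pstep w k (i + c) z * w (j + c - z))]
      refine tsum_congr fun z => ?_
      simp only [Equiv.coe_addRight]
      rw [pstep_translate k i z c]
      congr 1
      ring_nf

lemma pstep_shift {w : ℤ → ℝ} (k : ℕ) (i j : ℤ) :
    pstep w k i j = pstep w k 0 (j - i) := by
  have := pstep_translate (w := w) k 0 (j - i) i
  simpa using this

lemma pstep_exists_pos {w : ℤ → ℝ} (hw_nonneg : ∀ k, 0 ≤ w k)
    (hw_sum : ∑' k : ℤ, w k = 1) (hw_fin : (Function.support w).Finite) :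
    ∀ k : ℕ, ∃ z, 0 < pstep w k 0 z := by
  have hex : ∃ a, 0 < w a := by
    by_contra h
    push_neg at h
    have : ∀ a, w a = 0 := fun a => le_antisymm (h a) (hw_nonneg a)
    rw [tsum_congr this, tsum_zero] at hw_sum
    norm_num at hw_sum
  obtain ⟨a, ha⟩ := hex
  intro k
  induction k with
  | zero => exact ⟨0, by unfold pstep; norm_num⟩
  | succ k ih =>
      obtain ⟨z0, hz0⟩ := ih
      refine ⟨z0 + a, ?_⟩
      rw [pstep_succ]
      have hfin := pstep_support_finite hw_fin k 0
      have hsum : Summable (fun z => pstep w k 0 z * w (z0 + a - z)) :=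
        summable_of_ne_finset_zero (s := hfin.toFinset) (fun b hb => by
          have : pstep w k 0 b = 0 := by
            by_contra hb'
            exact hb (hfin.mem_toFinset.mpr hb')
          simp [this])
      have hle : pstep w k 0 z0 * w (z0 + a - z0) ≤
          ∑' z : ℤ, pstep w k 0 z * w (z0 + a - z) :=
        Summable.le_tsum hsum z0 (fun b _ => mul_nonneg (pstep_nonneg hw_nonneg k 0 b) (hw_nonneg _))
      have hpos : (0:ℝ) < pstep w k 0 z0 * w (z0 + a - z0) := by
        have h' : z0 + a - z0 = a := by ring
        rw [h']
        exact mul_pos hz0 ha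
      linarith

/-- Abstract key inequality: for a nonzero finitely supported `g : ℤ → ℝ` and
`i ≠ 0`, `∑ g(z-i) g(z) < ∑ g(z)²`. -/
lemma key_strict_ineq (g : ℤ → ℝ) (hgfin : (Function.support g).Finite)
    (i : ℤ) (hi : i ≠ 0) (z0 : ℤ) (hz0 : g z0 ≠ 0) :
    (∑' z : ℤ, g (z - i) * g z) < ∑' z : ℤ, g z * g z := by
  set S : Finset ℤ := hgfin.toFinset ∪ hgfin.toFinset.image (· + i) with hS
  have hgS : ∀ z ∉ S, g z = 0 := by
    intro z hz
    by_contra h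
    exact hz (Finset.mem_union_left _ (hgfin.mem_toFinset.mpr h))
  have hfS : ∀ z ∉ S, g (z - i) = 0 := by
    intro z hz
    by_contra h
    exact hz (Finset.mem_union_right _
      (Finset.mem_image.mpr ⟨z - i, hgfin.mem_toFinset.mpr h, by ring⟩))
  have t1 : (∑' z : ℤ, g (z - i) * g z) = ∑ z ∈ S, g (z - i) * g z :=
    tsum_eq_sum (fun b hb => by rw [hgS b hb, mul_zero])
  have t2 : (∑' z : ℤ, g z * g z) = ∑ z ∈ S, g z * g z :=
    tsum_eq_sum (fun b hb => by rw [hgS b hb, mul_zero])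
  have t3 : (∑ z ∈ S, g (z - i) * g (z - i)) = ∑ z ∈ S, g z * g z := by
    have e1 : (∑ z ∈ S, g (z - i) * g (z - i)) = ∑' z : ℤ, g (z - i) * g (z - i) :=
      (tsum_eq_sum (fun b hb => by rw [hfS b hb, mul_zero])).symm
    have e2 : (∑ z ∈ S, g z * g z) = ∑' z : ℤ, g z * g z :=
      (tsum_eq_sum (fun b hb => by rw [hgS b hb, mul_zero])).symm
    rw [e1, e2, ← (Equiv.addRight i).tsum_eq (fun z => g (z - i) * g (z - i))]
    refine tsum_congr fun z => ?_
    simp only [Equiv.coe_addRight]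
    congr 1 <;> · congr 1; ring
  have hneq : ∃ z ∈ S, g (z - i) ≠ g z := by
    by_contra h
    push_neg at h
    have hall : ∀ z, g (z - i) = g z := by
      intro z
      by_cases hz : z ∈ S
      · exact h z hz
      · rw [hgS z hz, hfS z hz]
    have hmem : ∀ n : ℕ, g (z0 + n * i) ≠ 0 := by
      intro n
      induction n with
      | zero => simpa using hz0
      | succ n ih =>
          have h2 := hall (z0 + ((n : ℤ) + 1) * i)
          have h3 : z0 + ((n : ℤ) + 1) * i - i = z0 + (n : ℤ) * i := by ring
          rw [h3] at h2
          push_cast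
          rw [← h2]
          exact ih
    have hinj : Function.Injective (fun n : ℕ => z0 + (n : ℤ) * i) := by
      intro m n hmn
      simp only at hmn
      have h4 : (m : ℤ) * i = (n : ℤ) * i := by linarith
      have := mul_right_cancel₀ hi h4
      exact_mod_cast this
    exact (Set.infinite_of_injective_forall_mem hinj
      (fun n => Function.mem_support.mpr (hmem n))) hgfin
  obtain ⟨z1, hz1S, hz1⟩ := hneq
  have key : 0 < ∑ z ∈ S, (g (z - i) - g z) ^ 2 := by
    refine Finset.sum_pos' (fun z _ => sq_nonneg _) ⟨z1, hz1S, ?_⟩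
    have hne : g (z1 - i) - g z1 ≠ 0 := sub_ne_zero_of_ne hz1
    exact lt_of_le_of_ne (sq_nonneg _) (Ne.symm (pow_ne_zero 2 hne))
  have expand : (∑ z ∈ S, (g (z - i) - g z) ^ 2) =
      ((∑ z ∈ S, g (z - i) * g (z - i)) + ∑ z ∈ S, g z * g z)
        - 2 * (∑ z ∈ S, g (z - i) * g z) := by
    have h : ∀ z ∈ S, (g (z - i) - g z) ^ 2 =
        (g (z - i) * g (z - i) + g z * g z) - 2 * (g (z - i) * g z) :=
      fun z _ => by ring
    rw [Finset.sum_congr rfl h, Finset.sum_sub_distrib, Finset.sum_add_distrib,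
      ← Finset.mul_sum]
  rw [t1, t2]
  rw [t3] at expand
  linarith

/-- For `qᵏ(i,0) = ∑_z pᵏ(i,z) pᵏ(0,z)` with `w` a finitely
supported, nondegenerate (span 1, `q(0,0) > 0`) probability vector, one has
the strict inequality `qᵏ(i,0) < qᵏ(0,0)` for all `k ≥ 1` and `i ≠ 0`. -/
theorem qk_strict_max_at_zero
    (w : ℤ → ℝ)
    (hw_nonneg : ∀ k, 0 ≤ w k) (hw_lt : ∀ k, w k < 1)
    (hw_sum : ∑' k : ℤ, w k = 1)
    (hw_fin : (Function.support w).Finite)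
    (hspan : ∀ k : ℕ, 0 < k →
      (∃ ℓ : ℤ, ∀ x : ℤ, w x ≠ 0 → (k : ℤ) ∣ (x - ℓ)) → k = 1)
    (hq00 : 0 < ∑' z : ℤ, w z * w z) :
    ∀ k : ℕ, 1 ≤ k → ∀ i : ℤ, i ≠ 0 →
      (∑' z : ℤ, pstep w k i z * pstep w k 0 z) <
        ∑' z : ℤ, pstep w k 0 z * pstep w k 0 z := by
  intro k _ i hi
  obtain ⟨z0, hz0⟩ := pstep_exists_pos hw_nonneg hw_sum hw_fin k
  have hrw : (∑' z : ℤ, pstep w k i z * pstep w k 0 z)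
      = ∑' z : ℤ, pstep w k 0 (z - i) * pstep w k 0 z :=
    tsum_congr fun z => by rw [pstep_shift k i z]
  rw [hrw]
  exact key_strict_ineq (pstep w k 0) (pstep_support_finite hw_fin k 0) i hi z0
    (ne_of_gt hz0)
end

section
/- Let p(i,j) = w(j-i) for a finitely supported probability vector w on ℤ with span 1. Every bounded p-harmonic function h : ℤ → ℝ (satisfying h(x) = ∑_z p(x,z)h(z) for all x) is constant. -/
theorem aux_le (S : Finset ℤ) (w : ℤ → ℝ) (hw0 : ∀ k, 0 ≤ w k)
    (hS1 : ∑ k ∈ S, w k = 1)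
    (h : ℤ → ℝ) (M : ℝ) (hb : ∀ x, |h x| ≤ M)
    (hh : ∀ x, h x = ∑ k ∈ S, w k * h (x + k))
    (a : ℤ) (ha : a ∈ S) (haq : 0 < w a) :
    ∀ x, h (x + a) ≤ h x := by
  set q := w a with hq
  have hq1 : q ≤ 1 := by
    rw [← hS1]
    exact Finset.single_le_sum (fun k _ => hw0 k) ha
  set u : ℤ → ℝ := fun x => h (x + a) - h x with hu_def
  have hub : ∀ x, u x ≤ 2 * M := by
    intro x
    have h1 := abs_le.mp (hb (x + a))
    have h2 := abs_le.mp (hb x)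
    simp only [hu_def]; linarith [h1.2, h2.1]
  have hbdd : BddAbove (Set.range u) := ⟨2 * M, by rintro _ ⟨x, rfl⟩; exact hub x⟩
  have hne : (Set.range u).Nonempty := ⟨u 0, 0, rfl⟩
  set c := sSup (Set.range u) with hc
  have hle_c : ∀ x, u x ≤ c := fun x => le_csSup hbdd ⟨x, rfl⟩
  -- u is harmonic
  have hu : ∀ x, u x = ∑ k ∈ S, w k * u (x + k) := by
    intro x
    have e1 : h (x + a) = ∑ k ∈ S, w k * h (x + k + a) := by
      rw [hh (x + a)]
      apply Finset.sum_congr rfl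
      intro k _; congr 1; ring
    simp only [hu_def, e1, hh x, ← Finset.sum_sub_distrib, mul_sub]
  -- the step inequality
  have step : ∀ x δ, 0 < δ → c - δ ≤ u x → c - δ / q ≤ u (x + a) := by
    intro x δ hδ hx
    have hsplit : u x = q * u (x + a) + ∑ k ∈ S.erase a, w k * u (x + k) := by
      rw [hu x, ← Finset.add_sum_erase S _ ha]
    have htail : ∑ k ∈ S.erase a, w k * u (x + k) ≤ (1 - q) * c := by
      have h1 : ∑ k ∈ S.erase a, w k * u (x + k) ≤ ∑ k ∈ S.erase a, w k * c := by
        apply Finset.sum_le_sum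
        intro k _
        exact mul_le_mul_of_nonneg_left (hle_c _) (hw0 k)
      have h2 : ∑ k ∈ S.erase a, w k = 1 - q := by
        rw [Finset.sum_erase_eq_sub ha, hS1]
      calc ∑ k ∈ S.erase a, w k * u (x + k) ≤ ∑ k ∈ S.erase a, w k * c := h1
        _ = (1 - q) * c := by rw [← Finset.sum_mul, h2]
    have hkey : q * c - δ ≤ q * u (x + a) := by nlinarith
    have hqne : q ≠ 0 := ne_of_gt haq
    have hexp : q * (c - δ / q) = q * c - δ := by field_simp
    have hiff : c - δ / q ≤ u (x + a) ↔ q * (c - δ / q) ≤ q * u (x + a) :=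
      (mul_le_mul_iff_of_pos_left haq).symm
    rw [hiff, hexp]
    exact hkey
  -- iterate
  have iter : ∀ δ, 0 < δ → ∀ x, c - δ ≤ u x → ∀ j : ℕ,
      c - δ / q ^ j ≤ u (x + (j : ℤ) * a) := by
    intro δ hδ x hx j
    induction j with
    | zero => simpa using hx
    | succ j ih =>
      have hδj : 0 < δ / q ^ j := div_pos hδ (pow_pos haq j)
      have := step (x + (j : ℤ) * a) (δ / q ^ j) hδj ih
      have heq : x + (j : ℤ) * a + a = x + ((j : ℕ) + 1 : ℤ) * a := by ring
      rw [heq] at this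
      have : c - δ / q ^ j / q ≤ u (x + ((j + 1 : ℕ) : ℤ) * a) := by
        convert this using 3 <;> push_cast <;> ring
      rwa [div_div, ← pow_succ] at this
  -- telescoping
  have tel : ∀ x, ∀ n : ℕ, ∑ j ∈ Finset.range n, u (x + (j : ℤ) * a)
      = h (x + (n : ℤ) * a) - h x := by
    intro x n
    have := Finset.sum_range_sub (fun j : ℕ => h (x + (j : ℤ) * a)) n
    simp only [Nat.cast_zero, zero_mul, add_zero] at this
    rw [← this]
    apply Finset.sum_congr rfl
    intro j _
    simp only [hu_def]
    congr 2
    push_cast; ring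
  -- n * c ≤ 2M for all n
  have hnc : ∀ n : ℕ, (n : ℝ) * c ≤ 2 * M + 2 * M := by
    intro n
    apply le_of_forall_pos_le_add
    intro ε hε
    have hδ : 0 < ε * q ^ n / (n + 1) := by positivity
    obtain ⟨y, ⟨x, rfl⟩, hy⟩ := exists_lt_of_lt_csSup hne
      (show c - ε * q ^ n / (n + 1) < c by linarith)
    set δ := ε * q ^ n / (n + 1) with hδdef
    have hxd : c - δ ≤ u x := le_of_lt hy
    have hsum : (n : ℝ) * (c - δ / q ^ n) ≤ ∑ j ∈ Finset.range n, u (x + (j : ℤ) * a) := by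
      have : ∀ j ∈ Finset.range n, c - δ / q ^ n ≤ u (x + (j : ℤ) * a) := by
        intro j hj
        have hj' : j ≤ n := le_of_lt (Finset.mem_range.mp hj)
        have hpow : q ^ n ≤ q ^ j := pow_le_pow_of_le_one (le_of_lt haq) hq1 hj'
        have : δ / q ^ j ≤ δ / q ^ n :=
          div_le_div_of_nonneg_left (le_of_lt hδ) (pow_pos haq n) hpow
        linarith [iter δ hδ x hxd j]
      calc (n : ℝ) * (c - δ / q ^ n) = ∑ _j ∈ Finset.range n, (c - δ / q ^ n) := by
            simp [mul_comm]; ring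
        _ ≤ _ := Finset.sum_le_sum this
    have hub2 : h (x + (n : ℤ) * a) - h x ≤ 2 * M := by
      have h1 := abs_le.mp (hb (x + (n : ℤ) * a))
      have h2 := abs_le.mp (hb x)
      linarith [h1.2, h2.1]
    rw [tel x n] at hsum
    have hnd : (n : ℝ) * (δ / q ^ n) ≤ ε := by
      have hqn : (0 : ℝ) < q ^ n := pow_pos haq n
      have h1 : δ / q ^ n = ε / ((n : ℝ) + 1) := by
        rw [hδdef]; field_simp
      rw [h1]
      calc (n : ℝ) * (ε / ((n : ℝ) + 1)) ≤ ((n : ℝ) + 1) * (ε / ((n : ℝ) + 1)) := by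
            apply mul_le_mul_of_nonneg_right (by linarith) (by positivity)
        _ = ε := by field_simp
    have hM0 : 0 ≤ M := le_trans (abs_nonneg _) (hb 0)
    have hexp : (n : ℝ) * (c - δ / q ^ n) = (n : ℝ) * c - (n : ℝ) * (δ / q ^ n) := by ring
    linarith
  -- conclude c ≤ 0
  have hc0 : c ≤ 0 := by
    by_contra hpos
    push_neg at hpos
    obtain ⟨n, hn⟩ := exists_nat_gt ((2 * M + 2 * M) / c)
    have := hnc n
    have h1 : (2 * M + 2 * M) / c < n := hn
    have h2 : 2 * M + 2 * M < n * c := by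
      rw [div_lt_iff₀ hpos] at h1; linarith
    linarith
  intro x
  have := hle_c x
  simp only [hu_def] at this
  linarith [hc0]


/-- Every bounded `p`-harmonic function for the kernel
`p(i,j) = w(j-i)` with `w` a finitely supported span-1 probability vector on
`ℤ` is constant. -/
theorem bounded_harmonic_constant
    (w : ℤ → ℝ)
    (hw_nonneg : ∀ k, 0 ≤ w k) (hw_lt : ∀ k, w k < 1)
    (hw_sum : ∑' k : ℤ, w k = 1)
    (hw_fin : (Function.support w).Finite)
    (hspan : ∀ k : ℕ, 0 < k →
      (∃ ℓ : ℤ, ∀ x : ℤ, w x ≠ 0 → (k : ℤ) ∣ (x - ℓ)) → k = 1)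
    (h : ℤ → ℝ)
    (hbdd : ∃ M : ℝ, ∀ x, |h x| ≤ M)
    (hharm : ∀ x : ℤ, h x = ∑' z : ℤ, w (z - x) * h z) :
    ∀ x y : ℤ, h x = h y := by
  obtain ⟨M, hM⟩ := hbdd
  set S : Finset ℤ := hw_fin.toFinset with hSdef
  have hmemS : ∀ k : ℤ, k ∈ S ↔ w k ≠ 0 := by
    intro k
    simp [hSdef, Function.mem_support]
  have hS1 : ∑ k ∈ S, w k = 1 := by
    rw [← hw_sum]
    exact (tsum_eq_sum (fun k hk => by
      by_contra hne
      exact hk ((hmemS k).mpr hne))).symm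
  -- finite-sum harmonicity
  have hh : ∀ x, h x = ∑ k ∈ S, w k * h (x + k) := by
    intro x
    have e1 : ∑' k : ℤ, w (x + k - x) * h (x + k) = ∑' z : ℤ, w (z - x) * h z :=
      (Equiv.addLeft x).tsum_eq (fun z => w (z - x) * h z)
    have e2 : ∑' k : ℤ, w k * h (x + k) = ∑' z : ℤ, w (z - x) * h z := by
      rw [← e1]
      congr 1
      funext k
      congr 2
      ring
    rw [hharm x, ← e2]
    exact tsum_eq_sum (fun k hk => by
      have : w k = 0 := by
        by_contra hne
        exact hk ((hmemS k).mpr hne)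
      simp [this])
  -- each support point is a period
  have hper : ∀ a : ℤ, w a ≠ 0 → ∀ x, h (x + a) = h x := by
    intro a ha x
    have haS : a ∈ S := (hmemS a).mpr ha
    have hapos : 0 < w a := lt_of_le_of_ne (hw_nonneg a) (Ne.symm ha)
    have le1 := aux_le S w hw_nonneg hS1 h M hM hh a haS hapos x
    have hh' : ∀ x, (-h) x = ∑ k ∈ S, w k * (-h) (x + k) := by
      intro x
      simp only [Pi.neg_apply, mul_neg, ← Finset.sum_neg_distrib, hh x]
    have hM' : ∀ x, |(-h) x| ≤ M := by
      intro x; simpa [abs_neg] using hM x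
    have le2 := aux_le S w hw_nonneg hS1 (-h) M hM' hh' a haS hapos x
    simp only [Pi.neg_apply] at le2
    linarith
  -- the period subgroup
  set P : AddSubgroup ℤ :=
    { carrier := {t | ∀ x, h (x + t) = h x}
      zero_mem' := by intro x; simp
      add_mem' := by
        intro s t hs ht x
        have : h (x + (s + t)) = h ((x + s) + t) := by ring_nf
        rw [this, ht (x + s), hs x]
      neg_mem' := by
        intro t ht x
        have h1 := ht (x - t)
        rw [sub_add_cancel] at h1
        rw [show x + -t = x - t from by ring]
        exact h1.symm } with hPdef
  have hmemP : ∀ t : ℤ, t ∈ P ↔ ∀ x, h (x + t) = h x := fun t => Iff.rfl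
  have hsuppP : ∀ a : ℤ, w a ≠ 0 → a ∈ P := fun a ha => hper a ha
  obtain ⟨g, hg⟩ := Int.subgroup_cyclic P
  have hdvd : ∀ a : ℤ, w a ≠ 0 → g ∣ a := by
    intro a ha
    have : a ∈ AddSubgroup.closure ({g} : Set ℤ) := hg ▸ hsuppP a ha
    rw [AddSubgroup.mem_closure_singleton] at this
    obtain ⟨n, hn⟩ := this
    exact ⟨n, by rw [← hn]; simp [smul_eq_mul, mul_comm]⟩
  by_cases hg0 : g = 0
  · exfalso
    have := hspan 2 (by norm_num) ⟨0, fun x hx => by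
      obtain ⟨n, hn⟩ := hdvd x hx
      rw [hg0] at hn
      simp at hn
      simp [hn]⟩
    omega
  · have h1 : g.natAbs = 1 := by
      apply hspan g.natAbs (Int.natAbs_pos.mpr hg0)
      exact ⟨0, fun x hx => by
        rw [sub_zero]
        exact Int.natAbs_dvd.mpr (hdvd x hx)⟩
    have hone : (1 : ℤ) ∈ P ∨ (-1 : ℤ) ∈ P := by
      rcases Int.natAbs_eq_iff.mp h1 with h2 | h2
      · left; rw [hg, AddSubgroup.mem_closure_singleton]
        exact ⟨1, by rw [h2]; simp⟩
      · right; rw [hg, AddSubgroup.mem_closure_singleton]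
        exact ⟨1, by rw [h2]; simp⟩
    have honeP : (1 : ℤ) ∈ P := by
      rcases hone with h2 | h2
      · exact h2
      · simpa using P.neg_mem h2
    intro x y
    have : y - x ∈ P := by
      have : y - x = (y - x) • (1 : ℤ) := by simp
      have hz := AddSubgroup.zsmul_mem P honeP (y - x)
      simpa using hz
    have hx := (hmemP _).mp this x
    rw [show x + (y - x) = y by ring] at hx
    exact hx.symm
end
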